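/- Combining the energy bound and the CSSP error bound: let A ∈ ℝ^{m×n}, 0 < r < rank(A), with column partition {V_i}_{i=1}^k, centroid dimensions d_i summing to r, ζ = max_i (1 + ‖C_i†‖₂‖V_i‖₂), and L* = max_i ⌈r/d_i⌉. If C ∈ ℝ^{m×r} is the partitioned-CSSP output (full column rank, with the blockwise error domination assumption), then ‖(I_m − CC†)A‖_F ≤ ζ · ( ‖A − A_r‖_F² + (1 − 1/L*)‖A_r‖_F² )^{1/2}. -/

import Mathlib

open Matrix BigOperators

/-- The Frobenius norm of a real matrix. -/
noncomputable def frobNorm {m n : Type*} [Fintype m] [Fintype n] (M : Matrix m n ℝ) : ℝ :=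
  Real.sqrt (∑ i, ∑ j, (M i j) ^ 2)

/-- The spectral (ℓ²-operator) norm of a real matrix. -/
noncomputable def specNorm {m n : Type*} [Fintype m] [Fintype n] [DecidableEq n]
    (M : Matrix m n ℝ) : ℝ :=
  ‖LinearMap.toContinuousLinearMap (Matrix.toEuclideanLin M)‖

/-- Moore–Penrose pseudoinverse of a full-column-rank matrix: `(MᵀM)⁻¹Mᵀ`. -/
noncomputable def pinvFR {m n : Type*} [Fintype m] [Fintype n] [DecidableEq n]
    (M : Matrix m n ℝ) : Matrix n m ℝ :=
  (Mᵀ * M)⁻¹ * Mᵀ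

/-- The Euclidean norm of a real vector. -/
noncomputable def euclNorm {n : Type*} [Fintype n] (x : n → ℝ) : ℝ :=
  Real.sqrt (∑ i, (x i) ^ 2)

/-!
On a block `V = V_i` put `P = C_i C_i†` and `Q = Û_i Û_iᵀ`, two orthogonal projections of the same
rank `d_i`. Split `(1 - P) V = (1 - P) (1 - Q) V + (1 - P) Q V`. The first term is at most
`‖(1 - Q) V‖_F`. For the second, equal-rank projections satisfy `‖(1 - P) Q‖_F = ‖(1 - Q) P‖_F`, and
`(1 - Q) P = (1 - Q) C_i C_i†` where the columns of `C_i` are columns of `V`. This gives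
`‖(1 - P) V‖_F ≤ (1 + ‖C_i†‖₂ ‖V‖₂) ‖(1 - Q) V‖_F`. With the blockwise domination assumption,
summing over blocks gives `‖(I - CC†)A‖_F² ≤ ζ² (‖A‖_F² - S)`, where `S = Σᵢ ‖Q_i V_i‖_F²`.

For the energy bound, cut the `r` columns of `U_r` into `⌈r/d_i⌉` groups of at most `d_i` columns.
Since `Û_i` captures the most energy of `V_i` among projections of rank at most `d_i`, each group
captures at most `‖Q_i V_i‖_F²`. Hence `‖A_r‖_F² ≤ L* S`, and Pythagoras,
`‖A‖_F² = ‖A_r‖_F² + ‖A - A_r‖_F²`, finishes the proof.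
-/

section FrobeniusNorm

variable {α β γ : Type*} [Fintype α] [Fintype β] [Fintype γ]

lemma frobNorm_nonneg (M : Matrix α β ℝ) : 0 ≤ frobNorm M := Real.sqrt_nonneg _

lemma frobNorm_sq (M : Matrix α β ℝ) : frobNorm M ^ 2 = ∑ i, ∑ j, M i j ^ 2 :=
  Real.sq_sqrt (by positivity)

lemma frobNorm_sq_eq_trace (M : Matrix α β ℝ) : frobNorm M ^ 2 = (Mᵀ * M).trace := by
  rw [frobNorm_sq, Finset.sum_comm]
  simp only [trace, diag, mul_apply, transpose_apply, sq]

lemma frobNorm_sq_eq_sum_rows (M : Matrix α β ℝ) :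
    frobNorm M ^ 2 = ∑ i, ‖WithLp.toLp 2 (M i)‖ ^ 2 := by
  simp only [frobNorm_sq, EuclideanSpace.real_norm_sq_eq]

attribute [local instance] Matrix.frobeniusNormedAddCommGroup in
lemma frobNorm_eq_frobenius_norm (M : Matrix α β ℝ) : frobNorm M = ‖M‖ := by
  rw [frobenius_norm_def, ← Real.sqrt_eq_rpow]
  simp [frobNorm, Real.norm_eq_abs]

attribute [local instance] Matrix.frobeniusNormedAddCommGroup in
lemma frobNorm_add_le (M N : Matrix α β ℝ) : frobNorm (M + N) ≤ frobNorm M + frobNorm N := by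
  simpa only [frobNorm_eq_frobenius_norm] using norm_add_le M N

lemma specNorm_nonneg [DecidableEq β] (M : Matrix α β ℝ) : 0 ≤ specNorm M := norm_nonneg _

open scoped Matrix.Norms.L2Operator in
lemma specNorm_eq_l2_opNorm [DecidableEq β] (M : Matrix α β ℝ) : specNorm M = ‖M‖ := rfl

open scoped Matrix.Norms.L2Operator in
lemma specNorm_transpose [DecidableEq α] [DecidableEq β] (M : Matrix α β ℝ) :
    specNorm Mᵀ = specNorm M := by
  rw [specNorm_eq_l2_opNorm, specNorm_eq_l2_opNorm, ← conjTranspose_eq_transpose_of_trivial,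
    l2_opNorm_conjTranspose]

open scoped Matrix.Norms.L2Operator in
lemma frobNorm_mul_le [DecidableEq β] [DecidableEq γ] (X : Matrix α β ℝ) (Y : Matrix β γ ℝ) :
    frobNorm (X * Y) ≤ frobNorm X * specNorm Y := by
  have hrow : ∀ i, ‖WithLp.toLp 2 ((X * Y) i)‖ ≤ specNorm Y * ‖WithLp.toLp 2 (X i)‖ := fun i => by
    rw [← specNorm_transpose, specNorm_eq_l2_opNorm]
    have := l2_opNorm_mulVec Yᵀ (WithLp.toLp 2 (X i))
    rwa [mulVec_transpose] at this
  rw [← pow_le_pow_iff_left₀ (frobNorm_nonneg _)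
    (mul_nonneg (frobNorm_nonneg _) (specNorm_nonneg _)) two_ne_zero, mul_pow,
    frobNorm_sq_eq_sum_rows, frobNorm_sq_eq_sum_rows, Finset.sum_mul]
  gcongr with i
  rw [← mul_pow, mul_comm]
  exact pow_le_pow_left₀ (norm_nonneg _) (hrow i) 2

lemma frobNorm_submatrix_le {δ : Type*} [Fintype δ] (M : Matrix α β ℝ) {f : δ → β}
    (hf : Function.Injective f) : frobNorm (M.submatrix id f) ≤ frobNorm M := by
  classical
  rw [← pow_le_pow_iff_left₀ (frobNorm_nonneg _) (frobNorm_nonneg _) two_ne_zero,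
    frobNorm_sq, frobNorm_sq]
  gcongr with i
  change ∑ j, M i (f j) ^ 2 ≤ _
  rw [← Finset.sum_image (f := fun j => M i j ^ 2) fun _ _ _ _ h => hf h]
  exact Finset.sum_le_univ_sum_of_nonneg fun _ => sq_nonneg _

lemma frobNorm_sq_eq_sum_submatrix_sigma {ι : Type*} [Fintype ι] {κ : ι → Type*}
    [∀ i, Fintype (κ i)] (M : Matrix α (Σ i, κ i) ℝ) :
    frobNorm M ^ 2 = ∑ i, frobNorm (M.submatrix id (Sigma.mk i)) ^ 2 := by
  simp only [frobNorm_sq, Fintype.sum_sigma]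
  exact Finset.sum_comm

lemma frobNorm_mul_of_transpose_mul_self_eq_one [DecidableEq β] {U : Matrix α β ℝ}
    (hU : Uᵀ * U = 1) (M : Matrix β γ ℝ) : frobNorm (U * M) = frobNorm M := by
  rw [← sq_eq_sq₀ (frobNorm_nonneg _) (frobNorm_nonneg _), frobNorm_sq_eq_trace,
    frobNorm_sq_eq_trace, transpose_mul, Matrix.mul_assoc, ← Matrix.mul_assoc Uᵀ, hU,
    Matrix.one_mul]

end FrobeniusNorm

section Projection

variable {α β : Type*} [Fintype α] [Fintype β]

lemma isStarProjection_iff_transpose [DecidableEq α] {P : Matrix α α ℝ} :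
    IsStarProjection P ↔ P * P = P ∧ Pᵀ = P := by
  rw [isStarProjection_iff', star_eq_conjTranspose, conjTranspose_eq_transpose_of_trivial]

lemma isStarProjection_mul_of_mul_eq_one [DecidableEq α] [DecidableEq β] {X : Matrix α β ℝ}
    {Y : Matrix β α ℝ} (hYX : Y * X = 1) (hsymm : (X * Y)ᵀ = X * Y) : IsStarProjection (X * Y) :=
  isStarProjection_iff_transpose.2
    ⟨by rw [Matrix.mul_assoc, ← Matrix.mul_assoc Y, hYX, Matrix.one_mul], hsymm⟩

lemma trace_mul_eq_card_of_mul_eq_one [DecidableEq β] {X : Matrix α β ℝ} {Y : Matrix β α ℝ}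
    (hYX : Y * X = 1) : (X * Y).trace = Fintype.card β := by
  rw [trace_mul_comm, hYX, trace_one]

lemma isStarProjection_mul_transpose [DecidableEq α] [DecidableEq β] {U : Matrix α β ℝ}
    (hU : Uᵀ * U = 1) : IsStarProjection (U * Uᵀ) :=
  isStarProjection_mul_of_mul_eq_one hU (by rw [transpose_mul, transpose_transpose])

lemma pinvFR_mul_self [DecidableEq β] {C : Matrix α β ℝ} (hC : IsUnit (Cᵀ * C)) :
    pinvFR C * C = 1 := by
  rw [pinvFR, Matrix.mul_assoc, nonsing_inv_mul _ ((isUnit_iff_isUnit_det _).1 hC)]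

lemma isStarProjection_mul_pinvFR [DecidableEq α] [DecidableEq β] {C : Matrix α β ℝ}
    (hC : IsUnit (Cᵀ * C)) : IsStarProjection (C * pinvFR C) := by
  refine isStarProjection_mul_of_mul_eq_one (pinvFR_mul_self hC) ?_
  have hG : ((Cᵀ * C)⁻¹)ᵀ = (Cᵀ * C)⁻¹ := by
    rw [transpose_nonsing_inv, transpose_mul, transpose_transpose]
  rw [pinvFR, transpose_mul, transpose_mul, transpose_transpose, hG, Matrix.mul_assoc]

namespace IsStarProjection

variable [DecidableEq α] {P Q : Matrix α α ℝ}

lemma transpose_eq (hP : IsStarProjection P) : Pᵀ = P :=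
  (isStarProjection_iff_transpose.1 hP).2

lemma frobNorm_sq_mul_eq_trace (hP : IsStarProjection P) (X : Matrix α β ℝ) :
    frobNorm (P * X) ^ 2 = (Xᵀ * (P * X)).trace := by
  rw [frobNorm_sq_eq_trace, transpose_mul, hP.transpose_eq, Matrix.mul_assoc,
    ← Matrix.mul_assoc P, hP.isIdempotentElem.eq]

lemma frobNorm_sq_add_frobNorm_one_sub_sq (hP : IsStarProjection P) (X : Matrix α β ℝ) :
    frobNorm (P * X) ^ 2 + frobNorm ((1 - P) * X) ^ 2 = frobNorm X ^ 2 := by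
  rw [hP.frobNorm_sq_mul_eq_trace, hP.one_sub.frobNorm_sq_mul_eq_trace, ← trace_add,
    ← Matrix.mul_add, ← Matrix.add_mul, add_sub_cancel, Matrix.one_mul, frobNorm_sq_eq_trace]

lemma frobNorm_mul_le (hP : IsStarProjection P) (X : Matrix α β ℝ) :
    frobNorm (P * X) ≤ frobNorm X := by
  rw [← pow_le_pow_iff_left₀ (frobNorm_nonneg _) (frobNorm_nonneg _) two_ne_zero,
    ← hP.frobNorm_sq_add_frobNorm_one_sub_sq X]
  exact le_add_of_nonneg_right (sq_nonneg _)

lemma frobNorm_sq_mul (hP : IsStarProjection P) (hQ : IsStarProjection Q) :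
    frobNorm (P * Q) ^ 2 = (P * Q).trace := by
  rw [hP.frobNorm_sq_mul_eq_trace, hQ.transpose_eq, trace_mul_comm, Matrix.mul_assoc,
    hQ.isIdempotentElem.eq]

/-- Both sides squared equal `tr Q - tr (P Q)`. -/
lemma frobNorm_one_sub_mul_comm (hP : IsStarProjection P) (hQ : IsStarProjection Q)
    (htr : P.trace = Q.trace) : frobNorm ((1 - P) * Q) = frobNorm ((1 - Q) * P) := by
  rw [← sq_eq_sq₀ (frobNorm_nonneg _) (frobNorm_nonneg _), hP.one_sub.frobNorm_sq_mul hQ,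
    hQ.one_sub.frobNorm_sq_mul hP, sub_mul, sub_mul, Matrix.one_mul, Matrix.one_mul, trace_sub,
    trace_sub, htr, trace_mul_comm P]

end IsStarProjection

end Projection

lemma Matrix.mul_submatrix_id {α β γ δ R : Type*} [Fintype β] [NonUnitalNonAssocSemiring R]
    (X : Matrix α β R) (M : Matrix β γ R) (f : δ → γ) :
    X * M.submatrix id f = (X * M).submatrix id f := by
  rw [submatrix_mul _ _ id id f Function.bijective_id, submatrix_id_id]

lemma isUnit_transpose_mul_self_of_rank_eq_card {α β : Type*} [Fintype α] [Fintype β]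
    [DecidableEq β] {C : Matrix α β ℝ} (h : C.rank = Fintype.card β) : IsUnit (Cᵀ * C) := by
  rw [← mulVec_surjective_iff_isUnit, ← coe_mulVecLin, ← LinearMap.range_eq_top]
  apply Submodule.eq_top_of_finrank_eq
  rw [Module.finrank_fintype_fun_eq_card, ← h, ← rank_transpose_mul_self]
  rfl

section ColumnSubsetSelection

variable {α β γ : Type*} [Fintype α] [Fintype β] [Fintype γ]
  [DecidableEq α] [DecidableEq β] [DecidableEq γ]

theorem frobNorm_one_sub_mul_pinvFR_mul_le (V : Matrix α γ ℝ) {U C : Matrix α β ℝ}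
    (hU : Uᵀ * U = 1) {f : β → γ} (hf : Function.Injective f) (hCf : C = V.submatrix id f)
    (hC : IsUnit (Cᵀ * C)) :
    frobNorm ((1 - C * pinvFR C) * V) ≤
      (1 + specNorm (pinvFR C) * specNorm V) * frobNorm ((1 - U * Uᵀ) * V) := by
  set P := C * pinvFR C
  set Q := U * Uᵀ
  have hP : IsStarProjection P := isStarProjection_mul_pinvFR hC
  have hQ : IsStarProjection Q := isStarProjection_mul_transpose hU
  have htr : P.trace = Q.trace := by
    rw [trace_mul_eq_card_of_mul_eq_one (pinvFR_mul_self hC), trace_mul_eq_card_of_mul_eq_one hU]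
  have hsplit : (1 - P) * V = (1 - P) * ((1 - Q) * V) + (1 - P) * Q * V := by
    rw [Matrix.mul_assoc, ← Matrix.mul_add, ← Matrix.add_mul, sub_add_cancel, Matrix.one_mul]
  have hCV : frobNorm ((1 - Q) * C) ≤ frobNorm ((1 - Q) * V) := by
    rw [hCf, mul_submatrix_id]
    exact frobNorm_submatrix_le _ hf
  calc frobNorm ((1 - P) * V)
      ≤ frobNorm ((1 - P) * ((1 - Q) * V)) + frobNorm ((1 - P) * Q * V) :=
        hsplit ▸ frobNorm_add_le _ _
    _ ≤ frobNorm ((1 - Q) * V) + frobNorm ((1 - P) * Q) * specNorm V :=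
        add_le_add (hP.one_sub.frobNorm_mul_le _) (frobNorm_mul_le _ _)
    _ = frobNorm ((1 - Q) * V) + frobNorm ((1 - Q) * C * pinvFR C) * specNorm V := by
        rw [hP.frobNorm_one_sub_mul_comm hQ htr, Matrix.mul_assoc]
    _ ≤ frobNorm ((1 - Q) * V) + frobNorm ((1 - Q) * V) * specNorm (pinvFR C) * specNorm V := by
        refine add_le_add le_rfl (mul_le_mul_of_nonneg_right ?_ (specNorm_nonneg V))
        exact (frobNorm_mul_le _ _).trans
          (mul_le_mul_of_nonneg_right hCV (specNorm_nonneg _))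
    _ = (1 + specNorm (pinvFR C) * specNorm V) * frobNorm ((1 - Q) * V) := by ring

end ColumnSubsetSelection

lemma transpose_mul_self_submatrix_eq_one {α ι κ : Type*} [Fintype α] [DecidableEq ι]
    [DecidableEq κ] {U : Matrix α ι ℝ} (hU : Uᵀ * U = 1) {e : κ → ι} (he : Function.Injective e) :
    (U.submatrix id e)ᵀ * U.submatrix id e = 1 := by
  rw [transpose_submatrix, ← submatrix_mul _ _ _ id _ Function.bijective_id, hU,
    submatrix_one _ he]

section Energy

variable {α γ ι : Type*} [Fintype α] [Fintype γ] [Fintype ι] [DecidableEq ι]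

theorem frobNorm_sq_mul_transpose_mul_le (U : Matrix α ι ℝ) (hU : Uᵀ * U = 1)
    (V : Matrix α γ ℝ) {d L : ℕ} (g : ι → ℕ) (hg : ∀ c, g c < L)
    (hfib : ∀ l, (Finset.univ.filter fun c => g c = l).card ≤ d) {W : ℝ}
    (hW : ∀ d' ≤ d, ∀ P : Matrix α (Fin d') ℝ, Pᵀ * P = 1 → frobNorm (P * Pᵀ * V) ≤ W) :
    frobNorm (U * Uᵀ * V) ^ 2 ≤ L * W ^ 2 := by
  have hfiber : ∀ l, ∑ c ∈ Finset.univ.filter (fun c => g c = l), ∑ j, (Uᵀ * V) c j ^ 2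
      ≤ W ^ 2 := fun l => by
    set G := Finset.univ.filter fun c => g c = l
    set P := U.submatrix id fun a => (G.equivFin.symm a : ι)
    have hP : Pᵀ * P = 1 := transpose_mul_self_submatrix_eq_one hU
      (Subtype.val_injective.comp G.equivFin.symm.injective)
    calc ∑ c ∈ G, ∑ j, (Uᵀ * V) c j ^ 2 = frobNorm (Pᵀ * V) ^ 2 := by
          rw [frobNorm_sq, ← Finset.sum_coe_sort G, ← G.equivFin.symm.sum_comp]
          rfl
      _ = frobNorm (P * Pᵀ * V) ^ 2 := by
          rw [Matrix.mul_assoc, frobNorm_mul_of_transpose_mul_self_eq_one hP]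
      _ ≤ W ^ 2 := pow_le_pow_left₀ (frobNorm_nonneg _) (hW _ (hfib l) P hP) 2
  calc frobNorm (U * Uᵀ * V) ^ 2
      = ∑ l ∈ Finset.range L, ∑ c ∈ Finset.univ.filter (fun c => g c = l),
          ∑ j, (Uᵀ * V) c j ^ 2 := by
        rw [Matrix.mul_assoc, frobNorm_mul_of_transpose_mul_self_eq_one hU, frobNorm_sq,
          Finset.sum_fiberwise_of_maps_to fun c _ => Finset.mem_range.2 (hg c)]
    _ ≤ ∑ _l ∈ Finset.range L, W ^ 2 := Finset.sum_le_sum fun l _ => hfiber l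
    _ = L * W ^ 2 := by rw [Finset.sum_const, Finset.card_range, nsmul_eq_mul]

end Energy

lemma Nat.div_lt_add_sub_one_div {c r d : ℕ} (hd : 0 < d) (hc : c < r) :
    c / d < (r + d - 1) / d := by
  rw [show r + d - 1 = r - 1 + d by omega, Nat.add_div_right _ hd, Nat.lt_succ_iff]
  exact Nat.div_le_div_right (by omega)

lemma Fin.card_filter_div_eq_le {r d : ℕ} (hd : 0 < d) (l : ℕ) :
    (Finset.univ.filter fun c : Fin r => (c : ℕ) / d = l).card ≤ d := by
  calc _ ≤ (Finset.range d).card := by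
        refine Finset.card_le_card_of_injOn (fun c => (c : ℕ) % d)
          (fun c _ => Finset.mem_range.2 (Nat.mod_lt _ hd)) ?_
        intro c₁ hc₁ c₂ hc₂ hmod
        rw [Finset.mem_coe, Finset.mem_filter] at hc₁ hc₂
        rw [Fin.ext_iff, ← Nat.div_add_mod c₁ d, ← Nat.div_add_mod c₂ d, hc₁.2, hc₂.2]
        exact congrArg _ hmod
    _ = d := Finset.card_range d

theorem frobNorm_le_of_blockwise_bounds {α ι : Type*} [Fintype α] [DecidableEq α] [Fintype ι]
    {κ : ι → Type*} [∀ i, Fintype (κ i)] (A E Ar : Matrix α (Σ i, κ i) ℝ)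
    {Q : ι → Matrix α α ℝ} (hQ : ∀ i, IsStarProjection (Q i)) {ζ L : ℝ} (hζ : 0 ≤ ζ)
    (hL : 0 ≤ L)
    (hE : ∀ i, frobNorm (E.submatrix id (Sigma.mk i)) ≤
      ζ * frobNorm ((1 - Q i) * A.submatrix id (Sigma.mk i)))
    (hAr : ∀ i, frobNorm (Ar.submatrix id (Sigma.mk i)) ^ 2 ≤
      L * frobNorm (Q i * A.submatrix id (Sigma.mk i)) ^ 2)
    (hpyth : frobNorm Ar ^ 2 + frobNorm (A - Ar) ^ 2 = frobNorm A ^ 2) :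
    frobNorm E ≤ ζ * √(frobNorm (A - Ar) ^ 2 + (1 - 1 / L) * frobNorm Ar ^ 2) := by
  set S := ∑ i, frobNorm (Q i * A.submatrix id (Sigma.mk i)) ^ 2
  have hES : frobNorm E ^ 2 ≤ ζ ^ 2 * (frobNorm A ^ 2 - S) := by
    rw [frobNorm_sq_eq_sum_submatrix_sigma E, frobNorm_sq_eq_sum_submatrix_sigma A,
      ← Finset.sum_sub_distrib, Finset.mul_sum]
    gcongr with i
    rw [← (hQ i).frobNorm_sq_add_frobNorm_one_sub_sq (A.submatrix id (Sigma.mk i)),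
      add_sub_cancel_left, ← mul_pow]
    exact pow_le_pow_left₀ (frobNorm_nonneg _) (hE i) 2
  have hArS : frobNorm Ar ^ 2 / L ≤ S := by
    refine div_le_of_le_mul₀ hL (Finset.sum_nonneg fun _ _ => sq_nonneg _) ?_
    rw [frobNorm_sq_eq_sum_submatrix_sigma, mul_comm, Finset.mul_sum]
    exact Finset.sum_le_sum fun i _ => hAr i
  rw [← abs_of_nonneg (frobNorm_nonneg E), ← Real.sqrt_sq hζ, ← Real.sqrt_mul (sq_nonneg ζ)]
  refine Real.abs_le_sqrt (hES.trans (mul_le_mul_of_nonneg_left ?_ (sq_nonneg ζ)))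
  rw [← hpyth, sub_mul, one_mul, one_div_mul_eq_div]
  linarith

theorem partitioned_cssp_combined_bound_general {m k : ℕ} (hk : 0 < k) (nn d : Fin k → ℕ)
    (hd : ∀ i, 0 < d i)
    (A : Matrix (Fin m) ((i : Fin k) × Fin (nn i)) ℝ)
    (r : ℕ)
    (C : Matrix (Fin m) ((i : Fin k) × Fin (d i)) ℝ)
    (hsel : ∀ i, ∃ f : Fin (d i) → Fin (nn i), Function.Injective f ∧
      C.submatrix id (Sigma.mk i) = (A.submatrix id (Sigma.mk i)).submatrix id f)
    (hrankCi : ∀ i, (C.submatrix id (Sigma.mk i)).rank = d i)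
    (Uh : (i : Fin k) → Matrix (Fin m) (Fin (d i)) ℝ)
    (hUh : ∀ i, (Uh i)ᵀ * Uh i = 1)
    (hmax : ∀ i (d' : ℕ), d' ≤ d i → ∀ P : Matrix (Fin m) (Fin d') ℝ, Pᵀ * P = 1 →
      frobNorm (P * Pᵀ * A.submatrix id (Sigma.mk i)) ≤
        frobNorm (Uh i * (Uh i)ᵀ * A.submatrix id (Sigma.mk i)))
    (hdom : ∀ i, frobNorm ((1 - C * pinvFR C) * A.submatrix id (Sigma.mk i)) ≤
      frobNorm ((1 - C.submatrix id (Sigma.mk i) * pinvFR (C.submatrix id (Sigma.mk i))) *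
        A.submatrix id (Sigma.mk i)))
    (Ur : Matrix (Fin m) (Fin r) ℝ) (hUr : Urᵀ * Ur = 1)
    (Ar : Matrix (Fin m) ((i : Fin k) × Fin (nn i)) ℝ) (hAr : Ar = Ur * Urᵀ * A)
    (Lstar : ℕ) (hL : Lstar = Finset.univ.sup fun i => (r + d i - 1) / d i)
    (ζ : ℝ) (hζ : ζ = Finset.univ.sup' (Finset.univ_nonempty_iff.mpr ⟨⟨0, hk⟩⟩)
      (fun i => 1 + specNorm (pinvFR (C.submatrix id (Sigma.mk i))) *
        specNorm (A.submatrix id (Sigma.mk i)))) :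
    frobNorm ((1 - C * pinvFR C) * A) ≤
      ζ * Real.sqrt (frobNorm (A - Ar) ^ 2 + (1 - 1 / (Lstar : ℝ)) * frobNorm Ar ^ 2) := by
  have hζi : ∀ i, 1 + specNorm (pinvFR (C.submatrix id (Sigma.mk i))) *
      specNorm (A.submatrix id (Sigma.mk i)) ≤ ζ := fun i =>
    hζ ▸ Finset.le_sup' (fun i => 1 + specNorm (pinvFR (C.submatrix id (Sigma.mk i))) *
      specNorm (A.submatrix id (Sigma.mk i))) (Finset.mem_univ i)
  have hζ0 : 0 ≤ ζ :=
    (add_nonneg zero_le_one (mul_nonneg (specNorm_nonneg _) (specNorm_nonneg _))).trans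
      (hζi ⟨0, hk⟩)
  refine frobNorm_le_of_blockwise_bounds A _ Ar (fun i => isStarProjection_mul_transpose (hUh i))
    hζ0 (Nat.cast_nonneg Lstar) (fun i => ?_) (fun i => ?_) ?_
  · obtain ⟨f, hf, hCf⟩ := hsel i
    have hC := isUnit_transpose_mul_self_of_rank_eq_card
      ((hrankCi i).trans (Fintype.card_fin _).symm)
    rw [← mul_submatrix_id]
    exact (hdom i).trans ((frobNorm_one_sub_mul_pinvFR_mul_le _ (hUh i) hf hCf hC).trans
      (mul_le_mul_of_nonneg_right (hζi i) (frobNorm_nonneg _)))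
  · rw [hAr, ← mul_submatrix_id]
    refine (frobNorm_sq_mul_transpose_mul_le Ur hUr _ (fun c => (c : ℕ) / d i)
      (fun c => Nat.div_lt_add_sub_one_div (hd i) c.2) (Fin.card_filter_div_eq_le (hd i))
      (hmax i)).trans (mul_le_mul_of_nonneg_right ?_ (sq_nonneg _))
    exact_mod_cast hL ▸ Finset.le_sup (f := fun i => (r + d i - 1) / d i) (Finset.mem_univ i)
  · have h := (isStarProjection_mul_transpose hUr).frobNorm_sq_add_frobNorm_one_sub_sq A
    rwa [Matrix.sub_mul, Matrix.one_mul, ← hAr] at h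

/-- combined bound: `‖(I - CC†)A‖_F ≤ ζ (‖A - A_r‖_F² + (1 - 1/L*)‖A_r‖_F²)^{1/2}`. -/
theorem partitioned_cssp_combined_bound {m k : ℕ} (hk : 0 < k) (nn d : Fin k → ℕ)
    (hd : ∀ i, 0 < d i)
    (A : Matrix (Fin m) ((i : Fin k) × Fin (nn i)) ℝ)
    (r : ℕ) (hr : r = ∑ i, d i) (hrank : r < A.rank)
    (C : Matrix (Fin m) ((i : Fin k) × Fin (d i)) ℝ)
    (hrankC : C.rank = Fintype.card ((i : Fin k) × Fin (d i)))
    (hsel : ∀ i, ∃ f : Fin (d i) → Fin (nn i), Function.Injective f ∧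
      C.submatrix id (Sigma.mk i) = (A.submatrix id (Sigma.mk i)).submatrix id f)
    (hrankCi : ∀ i, (C.submatrix id (Sigma.mk i)).rank = d i)
    (Uh : (i : Fin k) → Matrix (Fin m) (Fin (d i)) ℝ)
    (hUh : ∀ i, (Uh i)ᵀ * Uh i = 1)
    (hmax : ∀ i (d' : ℕ), d' ≤ d i → ∀ P : Matrix (Fin m) (Fin d') ℝ, Pᵀ * P = 1 →
      frobNorm (P * Pᵀ * A.submatrix id (Sigma.mk i)) ≤
        frobNorm (Uh i * (Uh i)ᵀ * A.submatrix id (Sigma.mk i)))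
    (hEY : ∀ i, ∀ P : Matrix (Fin m) (Fin (d i)) ℝ, Pᵀ * P = 1 →
      frobNorm ((1 - Uh i * (Uh i)ᵀ) * A.submatrix id (Sigma.mk i)) ≤
        frobNorm ((1 - P * Pᵀ) * A.submatrix id (Sigma.mk i)))
    (hdom : ∀ i, frobNorm ((1 - C * pinvFR C) * A.submatrix id (Sigma.mk i)) ≤
      frobNorm ((1 - C.submatrix id (Sigma.mk i) * pinvFR (C.submatrix id (Sigma.mk i))) *
        A.submatrix id (Sigma.mk i)))
    (Ur : Matrix (Fin m) (Fin r) ℝ) (hUr : Urᵀ * Ur = 1)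
    (hEYr : ∀ P : Matrix (Fin m) (Fin r) ℝ, Pᵀ * P = 1 →
      frobNorm (A - Ur * Urᵀ * A) ≤ frobNorm (A - P * Pᵀ * A))
    (Ar : Matrix (Fin m) ((i : Fin k) × Fin (nn i)) ℝ) (hAr : Ar = Ur * Urᵀ * A)
    (Lstar : ℕ) (hL : Lstar = Finset.univ.sup fun i => (r + d i - 1) / d i)
    (ζ : ℝ) (hζ : ζ = Finset.univ.sup' (Finset.univ_nonempty_iff.mpr ⟨⟨0, hk⟩⟩)
      (fun i => 1 + specNorm (pinvFR (C.submatrix id (Sigma.mk i))) *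
        specNorm (A.submatrix id (Sigma.mk i)))) :
    frobNorm ((1 - C * pinvFR C) * A) ≤
      ζ * Real.sqrt (frobNorm (A - Ar) ^ 2 + (1 - 1 / (Lstar : ℝ)) * frobNorm Ar ^ 2) :=
  partitioned_cssp_combined_bound_general hk nn d hd A r C hsel hrankCi Uh hUh hmax hdom Ur hUr Ar
    hAr Lstar hL ζ hζ
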